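/- The Green function G satisfies: G ≥ 0 on ℂ², G(f_λ(z), λ) = 2·G(z,λ) for all (z,λ) ∈ ℂ², and 𝒦 = {(z,λ) ∈ ℂ² : G(z,λ) = 0}. -/

import Mathlib

/-!
The approximants `2⁻ⁿ log⁺ |f_λⁿ(z)|` satisfy the functional equation exactly after an index
shift, so it passes to the limit. A bounded orbit makes them tend to `0`. Outside the disc of
radius `R = max 4 (2|λ|)` one has `|f_λ(z)| / 2 ≥ (|z| / 2)²`, so an orbit that leaves this disc
has `G ≥ log 2` there, and the functional equation carries `G > 0` back to the starting point.
-/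

open Filter Topology

/-- `log⁺ t = log (max t 1)`. -/
noncomputable def logPlus (t : ℝ) : ℝ := Real.log (max t 1)

/-- `𝒦 = {(z,λ) : the orbit of z under f_λ is bounded}`. -/
def bigK : Set (ℂ × ℂ) :=
  {p | ∃ M : ℝ, ∀ n : ℕ, ‖(fun z => z ^ 2 + p.2)^[n] p.1‖ ≤ M}

lemma logPlus_nonneg (t : ℝ) : 0 ≤ logPlus t :=
  Real.log_nonneg (le_max_right _ _)

lemma logPlus_mono {s t : ℝ} (h : s ≤ t) : logPlus s ≤ logPlus t :=
  Real.log_le_log (lt_of_lt_of_le one_pos (le_max_right s 1)) (max_le_max h le_rfl)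

lemma log_le_logPlus {t : ℝ} (ht : 0 < t) : Real.log t ≤ logPlus t :=
  Real.log_le_log ht (le_max_left t 1)

noncomputable def greenApprox (c : ℂ) (n : ℕ) (z : ℂ) : ℝ :=
  (2 : ℝ)⁻¹ ^ n * logPlus ‖(fun w => w ^ 2 + c)^[n] z‖

lemma greenApprox_nonneg (c : ℂ) (n : ℕ) (z : ℂ) : 0 ≤ greenApprox c n z :=
  mul_nonneg (by positivity) (logPlus_nonneg _)

lemma greenApprox_succ (c : ℂ) (n : ℕ) (z : ℂ) :
    greenApprox c (n + 1) z = 2⁻¹ * greenApprox c n (z ^ 2 + c) := by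
  rw [greenApprox, greenApprox, Function.iterate_succ_apply, pow_succ]
  ring

lemma tendsto_greenApprox_zero_of_bounded {c z : ℂ} {M : ℝ}
    (hM : ∀ n, ‖(fun w => w ^ 2 + c)^[n] z‖ ≤ M) :
    Tendsto (fun n => greenApprox c n z) atTop (𝓝 0) := by
  have hdom : Tendsto (fun n : ℕ => (2 : ℝ)⁻¹ ^ n * logPlus M) atTop (𝓝 0) := by
    simpa using (tendsto_pow_atTop_nhds_zero_of_lt_one (by norm_num : (0 : ℝ) ≤ 2⁻¹)
      (by norm_num : (2 : ℝ)⁻¹ < 1)).mul_const (logPlus M)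
  exact squeeze_zero (greenApprox_nonneg c · z)
    (fun n => mul_le_mul_of_nonneg_left (logPlus_mono (hM n)) (by positivity)) hdom

noncomputable def escapeRadius (c : ℂ) : ℝ := max 4 (2 * ‖c‖)

lemma norm_sq_div_two_le_of_escapeRadius_le {c z : ℂ} (hz : escapeRadius c ≤ ‖z‖) :
    ‖z‖ ^ 2 / 2 ≤ ‖z ^ 2 + c‖ := by
  have h4 : 4 ≤ ‖z‖ := (le_max_left _ _).trans hz
  have hc : 2 * ‖c‖ ≤ ‖z‖ := (le_max_right _ _).trans hz
  have := norm_sub_le_norm_add (z ^ 2) c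
  rw [norm_pow] at this
  nlinarith

lemma escapeRadius_le_norm_iterate {c z : ℂ} (hz : escapeRadius c ≤ ‖z‖) (n : ℕ) :
    escapeRadius c ≤ ‖(fun w => w ^ 2 + c)^[n] z‖ ∧
      (‖z‖ / 2) ^ 2 ^ n ≤ ‖(fun w => w ^ 2 + c)^[n] z‖ / 2 := by
  induction n with
  | zero => simpa using hz
  | succ n ih =>
    obtain ⟨hR, hpow⟩ := ih
    set w := (fun w => w ^ 2 + c)^[n] z
    have h4 : 4 ≤ ‖w‖ := (le_max_left _ _).trans hR
    have hstep := norm_sq_div_two_le_of_escapeRadius_le hR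
    rw [Function.iterate_succ_apply']
    refine ⟨by nlinarith, ?_⟩
    calc (‖z‖ / 2) ^ 2 ^ (n + 1) = ((‖z‖ / 2) ^ 2 ^ n) ^ 2 := by rw [pow_succ, pow_mul]
      _ ≤ (‖w‖ / 2) ^ 2 := by gcongr
      _ ≤ ‖w ^ 2 + c‖ / 2 := by linarith

lemma log_two_le_greenApprox {c z : ℂ} (hz : escapeRadius c ≤ ‖z‖) (n : ℕ) :
    Real.log 2 ≤ greenApprox c n z := by
  obtain ⟨-, hpow⟩ := escapeRadius_le_norm_iterate hz n
  have h2 : 2 ≤ ‖z‖ / 2 := by linarith [(le_max_left 4 (2 * ‖c‖)).trans hz]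
  have hpos : 0 < (‖z‖ / 2) ^ 2 ^ n := by positivity
  have hnorm : (‖z‖ / 2) ^ 2 ^ n ≤ ‖(fun w => w ^ 2 + c)^[n] z‖ := by linarith
  have hlog : 2 ^ n * Real.log 2 ≤ logPlus ‖(fun w => w ^ 2 + c)^[n] z‖ :=
    calc 2 ^ n * Real.log 2 = Real.log (2 ^ 2 ^ n) := by rw [Real.log_pow]; push_cast; ring
      _ ≤ Real.log ((‖z‖ / 2) ^ 2 ^ n) := Real.log_le_log (by positivity) (by gcongr)
      _ ≤ Real.log ‖(fun w => w ^ 2 + c)^[n] z‖ := Real.log_le_log hpos hnorm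
      _ ≤ logPlus ‖(fun w => w ^ 2 + c)^[n] z‖ := log_le_logPlus (hpos.trans_le hnorm)
  calc Real.log 2 = (2 : ℝ)⁻¹ ^ n * (2 ^ n * Real.log 2) := by
        rw [← mul_assoc, ← mul_pow]; norm_num
    _ ≤ greenApprox c n z := mul_le_mul_of_nonneg_left hlog (by positivity)

section Green

variable {G : ℂ × ℂ → ℝ}
  (hG : ∀ p : ℂ × ℂ, Tendsto (fun n => greenApprox p.2 n p.1) atTop (𝓝 (G p)))
include hG

lemma green_nonneg (p : ℂ × ℂ) : 0 ≤ G p :=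
  ge_of_tendsto' (hG p) (greenApprox_nonneg p.2 · p.1)

lemma green_sq_add (z c : ℂ) : G (z ^ 2 + c, c) = 2 * G (z, c) := by
  have hshift : Tendsto (fun n => 2 * greenApprox c (n + 1) z) atTop (𝓝 (2 * G (z, c))) :=
    ((hG (z, c)).comp (tendsto_add_atTop_nat 1)).const_mul 2
  refine tendsto_nhds_unique (hG (z ^ 2 + c, c)) (hshift.congr fun n => ?_)
  rw [greenApprox_succ]
  ring

lemma green_iterate (z c : ℂ) (n : ℕ) :
    G ((fun w => w ^ 2 + c)^[n] z, c) = 2 ^ n * G (z, c) := by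
  induction n with
  | zero => simp
  | succ n ih => rw [Function.iterate_succ_apply', green_sq_add hG, ih, pow_succ]; ring

lemma green_pos_of_not_mem_bigK {p : ℂ × ℂ} (hp : p ∉ bigK) : 0 < G p := by
  obtain ⟨z, c⟩ := p
  simp only [bigK, Set.mem_ofPred_eq, not_exists, not_forall, not_le] at hp
  obtain ⟨n, hn⟩ := hp (escapeRadius c)
  have hescape : Real.log 2 ≤ 2 ^ n * G (z, c) := by
    rw [← green_iterate hG]
    exact ge_of_tendsto' (hG _) (log_two_le_greenApprox hn.le)
  have hlog : 0 < Real.log 2 := Real.log_pos one_lt_two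
  exact pos_of_mul_pos_right (hlog.trans_le hescape) (by positivity)

lemma mem_bigK_iff_green_eq_zero (p : ℂ × ℂ) : p ∈ bigK ↔ G p = 0 := by
  refine ⟨fun ⟨M, hM⟩ => tendsto_nhds_unique (hG p) (tendsto_greenApprox_zero_of_bounded hM),
    fun h0 => ?_⟩
  by_contra hp
  exact (green_pos_of_not_mem_bigK hG hp).ne' h0

end Green

theorem stmt2 (G : ℂ × ℂ → ℝ)
    (hG : ∀ p : ℂ × ℂ, Filter.Tendsto
      (fun n : ℕ => (2 : ℝ)⁻¹ ^ n * logPlus ‖(fun z => z ^ 2 + p.2)^[n] p.1‖)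
      Filter.atTop (nhds (G p))) :
    (∀ p : ℂ × ℂ, 0 ≤ G p) ∧
    (∀ z lam : ℂ, G (z ^ 2 + lam, lam) = 2 * G (z, lam)) ∧
    bigK = {p : ℂ × ℂ | G p = 0} :=
  ⟨green_nonneg hG, green_sq_add hG, Set.ext (mem_bigK_iff_green_eq_zero hG)⟩
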